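/- For any partitions λ, μ, ν with |λ| + |μ| = |ν|, the Littlewood-Richardson coefficient c_{λ,μ}^ν equals the number of integer lattice points in the polytope P_{λ,μ}^ν ⊆ R^{ℓ(ν)·ℓ(μ)} defined by: (A) r_k^i ≥ 0 for all i,k; (B) λ_i + Σ_k r_k^i = ν_i for all i; (C) Σ_i r_k^i = μ_k for all k; (D) λ_{i+1} + Σ_{j≤k} r_j^{i+1} ≤ λ_i + Σ_{j'<k} r_{j'}^i for all i,k; (E) Σ_{i'<i} r_k^{i'} ≥ r_{k+1}^i + Σ_{i'<i} r_{k+1}^{i'} for all i,k. -/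

import Mathlib

open scoped BigOperators Classical

noncomputable section

/-- A partition: a weakly decreasing sequence of naturals that is eventually zero. -/
structure Partn where
  part : ℕ → ℕ
  antitone' : ∀ ⦃i j : ℕ⦄, i ≤ j → part j ≤ part i
  bounded' : ∃ N, ∀ i, N ≤ i → part i = 0

namespace Partn

/-- The size `|λ|` of a partition: the sum of its parts. -/
def size (l : Partn) : ℕ := ∑' i, l.part i

/-- The number of (nonzero) parts `ℓ(λ)`. -/
def numParts (l : Partn) : ℕ := Nat.card {i : ℕ // l.part i ≠ 0}

/-- Componentwise containment of partitions. -/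
def le (l m : Partn) : Prop := ∀ i, l.part i ≤ m.part i

/-- Componentwise addition of partitions. -/
def add (l m : Partn) : Partn where
  part := fun i => l.part i + m.part i
  antitone' := fun _ _ h => Nat.add_le_add (l.antitone' h) (m.antitone' h)
  bounded' := by
    obtain ⟨N, hN⟩ := l.bounded'
    obtain ⟨M, hM⟩ := m.bounded'
    exact ⟨max N M, fun i hi => by
      rw [hN i (le_trans (le_max_left _ _) hi), hM i (le_trans (le_max_right _ _) hi)]⟩

/-- The dilation `N·λ` of a partition: multiply every part by `N`. -/
def smul (N : ℕ) (l : Partn) : Partn where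
  part := fun i => N * l.part i
  antitone' := fun _ _ h => Nat.mul_le_mul_left _ (l.antitone' h)
  bounded' := by
    obtain ⟨M, hM⟩ := l.bounded'
    exact ⟨M, fun i hi => by rw [hM i hi, Nat.mul_zero]⟩

/-- A strict partition: the nonzero parts are strictly decreasing. -/
def IsStrict (l : Partn) : Prop := ∀ i, l.part (i + 1) ≠ 0 → l.part (i + 1) < l.part i

end Partn

/-- A partition with two (possibly zero) parts. -/
def twoRow (a b : ℕ) (h : b ≤ a) : Partn where
  part := fun i => if i = 0 then a else if i = 1 then b else 0
  antitone' := by intro i j hij; split_ifs <;> omega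
  bounded' := ⟨2, fun i hi => by split_ifs <;> omega⟩

/-- The staircase partition `ρ_n = (n, n-1, …, 1)`. -/
def staircase (n : ℕ) : Partn where
  part := fun i => n - i
  antitone' := fun _ _ h => Nat.sub_le_sub_left h n
  bounded' := ⟨n, fun _ hi => Nat.sub_eq_zero_of_le hi⟩

/-- The box `(i, j)` (matrix coordinates, 0-based) lies in the skew shape `ν/λ`. -/
def InCell (nu lam : Partn) (i j : ℕ) : Prop := lam.part i ≤ j ∧ j < nu.part i

/-- `T` is a semistandard Young tableau of skew shape `ν/λ` (entries `≥ 1` in the shape,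
rows weakly increasing, columns strictly increasing, zero outside the shape). -/
def IsSSYT (nu lam : Partn) (T : ℕ → ℕ → ℕ) : Prop :=
  (∀ i j, ¬ InCell nu lam i j → T i j = 0) ∧
  (∀ i j, InCell nu lam i j → 1 ≤ T i j) ∧
  (∀ i j, InCell nu lam i j → InCell nu lam i (j + 1) → T i j ≤ T i (j + 1)) ∧
  (∀ i j, InCell nu lam i j → InCell nu lam (i + 1) j → T i j < T (i + 1) j)

/-- The number of entries of `T` (within the shape `ν/λ`) equal to `k`. -/
def contentCount (nu lam : Partn) (T : ℕ → ℕ → ℕ) (k : ℕ) : ℕ :=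
  Nat.card {p : ℕ × ℕ // InCell nu lam p.1 p.2 ∧ T p.1 p.2 = k}

/-- The number of entries equal to `k` among the cells weakly before `(i,j)` in the
row reading order (rows read right to left, top to bottom). -/
def prefixCount (nu lam : Partn) (T : ℕ → ℕ → ℕ) (i j k : ℕ) : ℕ :=
  Nat.card {p : ℕ × ℕ // InCell nu lam p.1 p.2 ∧ T p.1 p.2 = k ∧
    (p.1 < i ∨ (p.1 = i ∧ j ≤ p.2))}

/-- Ballotness of a tableau: in each prefix of the reading word there are at least as many
`k`'s as `(k+1)`'s. -/
def IsBallot (nu lam : Partn) (T : ℕ → ℕ → ℕ) : Prop :=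
  ∀ i j k, 1 ≤ k → prefixCount nu lam T i j (k + 1) ≤ prefixCount nu lam T i j k

/-- The set of ballot semistandard Young tableaux of shape `ν/λ` and content `μ`. -/
def LRset (lam mu nu : Partn) : Set (ℕ → ℕ → ℕ) :=
  {T | IsSSYT nu lam T ∧ (∀ k, contentCount nu lam T (k + 1) = mu.part k) ∧ IsBallot nu lam T}

/-- The Littlewood-Richardson coefficient `c_{λ,μ}^ν`, as the number of ballot semistandard
skew tableaux of shape `ν/λ` and content `μ`. -/
def lrCoeff (lam mu nu : Partn) : ℕ := Nat.card (LRset lam mu nu)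

/-- Membership in the Littlewood-Richardson polytope `P_{λ,μ}^ν`.  The coordinate `r k i`
records the (real) number of entries equal to `k+1` in row `i` (both 0-based); coordinates
outside the `ℓ(μ) × ℓ(ν)` range vanish. -/
def InLRPolytope (lam mu nu : Partn) (r : ℕ → ℕ → ℝ) : Prop :=
  (∀ k i, (mu.numParts ≤ k ∨ nu.numParts ≤ i) → r k i = 0) ∧
  -- (A) nonnegativity
  (∀ k i, 0 ≤ r k i) ∧
  -- (B) shape constraints
  (∀ i, (lam.part i : ℝ) + ∑ k ∈ Finset.range mu.numParts, r k i = (nu.part i : ℝ)) ∧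
  -- (C) content constraints
  (∀ k, ∑ i ∈ Finset.range nu.numParts, r k i = (mu.part k : ℝ)) ∧
  -- (D) tableau constraints
  (∀ i k, (lam.part (i + 1) : ℝ) + ∑ j ∈ Finset.range (k + 1), r j (i + 1)
      ≤ (lam.part i : ℝ) + ∑ j ∈ Finset.range k, r j i) ∧
  -- (E) ballot constraints
  (∀ i k, r (k + 1) i + ∑ i' ∈ Finset.range i, r (k + 1) i' ≤ ∑ i' ∈ Finset.range i, r k i')

/-- The `m`-th part (0-based) of the partition `τ(I)` associated to a finite set `I ⊆ ℕ`
(0-based version of `I ⊆ [r]`): it counts the naturals `j ∉ I` having at least `m+1`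
elements of `I` above them. -/
def tauPart (I : Finset ℕ) (m : ℕ) : ℕ :=
  (((Finset.range ((I.sup id) + 1)) \ I).filter
    (fun j => m + 1 ≤ (I.filter (fun e => j < e)).card)).card

/-- The partition `τ(I) = (i_d − d ≥ … ≥ i_1 − 1)` for `I = {i_1 < … < i_d}` (here encoded
0-based: `I ⊆ {0,…,r−1}` corresponds to `{i−1 : i ∈ [r]}`). -/
def tau (I : Finset ℕ) : Partn where
  part := tauPart I
  antitone' := by
    intro i j hij
    apply Finset.card_le_card
    apply Finset.monotone_filter_right
    intro x hx
    omega
  bounded' := ⟨I.card, fun m hm => by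
    unfold tauPart
    convert Finset.card_empty
    rw [Finset.filter_eq_empty_iff]
    intro j _
    have := Finset.card_filter_le I (fun e => j < e)
    omega⟩
/-! ### Shifted diagrams, marked tableaux, and Stembridge's rule -/

/-- The box `(i,j)` (0-based) lies in the shifted skew diagram `ν/λ`
(rows of the shifted diagram of `ν` are indented). -/
def InShifted (nu lam : Partn) (i j : ℕ) : Prop :=
  i ≤ j ∧ j < nu.part i + i ∧ lam.part i + i ≤ j

/-- A marked (shifted) semistandard tableau of shifted skew shape `ν/λ`, with entries encoded
as naturals `e ≥ 1`: `e = 2k` encodes the unprimed letter `k`, `e = 2k−1` encodes the primed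
letter `k'` (so the encoding respects `1' < 1 < 2' < 2 < ⋯`).  Rows and columns weakly
increase, primed letters do not repeat in a row, unprimed letters do not repeat in a column,
and no primed letter appears on the main diagonal. -/
def IsMarkedSSYT (nu lam : Partn) (T : ℕ → ℕ → ℕ) : Prop :=
  (∀ i j, ¬ InShifted nu lam i j → T i j = 0) ∧
  (∀ i j, InShifted nu lam i j → 1 ≤ T i j) ∧
  (∀ i j, InShifted nu lam i j → InShifted nu lam i (j + 1) → T i j ≤ T i (j + 1)) ∧
  (∀ i j, InShifted nu lam i j → InShifted nu lam (i + 1) j → T i j ≤ T (i + 1) j) ∧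
  (∀ i j, InShifted nu lam i j → InShifted nu lam i (j + 1) → Odd (T i j) →
    T i j < T i (j + 1)) ∧
  (∀ i j, InShifted nu lam i j → InShifted nu lam (i + 1) j → Even (T i j) →
    T i j < T (i + 1) j) ∧
  (∀ i, InShifted nu lam i i → ¬ Odd (T i i))

/-- The reading word of a (shifted skew) tableau: rows are read left to right, starting with
the bottom row. -/
def readWord (nu lam : Partn) (T : ℕ → ℕ → ℕ) : List ℕ :=
  ((List.range (nu.size + 1)).reverse).flatMap (fun i =>
    (List.range (2 * nu.size + 1)).filterMap (fun j =>
      if InShifted nu lam i j then some (T i j) else none))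

/-- Stembridge's statistic `JS_i(j)` of a marked word `w` (entries encoded as above):
for `j ≤ n` it counts unprimed `i`'s among the last `j` letters; for `j > n` it adds the
number of primed `i`'s among the first `j − n` letters. -/
def JS (w : List ℕ) (i j : ℕ) : ℕ :=
  if j ≤ w.length then (w.drop (w.length - j)).count (2 * i)
  else w.count (2 * i) + (w.take (j - w.length)).count (2 * i - 1)

/-- A marked word is proto-ballot if whenever `JS_i(j) = JS_{i−1}(j)` the appropriate letter
is forbidden. -/
def ProtoBallot (w : List ℕ) : Prop :=
  ∀ i, 1 ≤ i → ∀ j, JS w i j = JS w (i - 1) j →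
    (j < w.length →
      w.getD (w.length - j - 1) 0 ≠ 2 * i ∧ w.getD (w.length - j - 1) 0 ≠ 2 * i - 1) ∧
    (w.length ≤ j → j < 2 * w.length →
      w.getD (j - w.length) 0 ≠ 2 * (i - 1) ∧ w.getD (j - w.length) 0 ≠ 2 * i - 1)

/-- A marked word is ballot if it is proto-ballot and, for each value `i`, the leftmost
letter of value `i` is unprimed. -/
def BallotWord (w : List ℕ) : Prop :=
  ProtoBallot w ∧
  ∀ i, 1 ≤ i → ∀ k, w.getD k 0 = 2 * i - 1 → ∃ k' < k, w.getD k' 0 = 2 * i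

/-- The shifted Littlewood-Richardson coefficient `o_{λ,μ}^ν` via Stembridge's rule:
the number of marked shifted semistandard tableaux of shifted skew shape `ν/λ` and
content `μ` whose reading word is ballot. -/
def shiftedLR (lam mu nu : Partn) : ℕ :=
  Nat.card {T : ℕ → ℕ → ℕ //
    IsMarkedSSYT nu lam T ∧
    (∀ k, 1 ≤ k →
      Nat.card {p : ℕ × ℕ // InShifted nu lam p.1 p.2 ∧ (T p.1 p.2 + 1) / 2 = k}
        = mu.part (k - 1)) ∧
    BallotWord (readWord nu lam T)}

/-! ### Excited Young diagrams -/

/-- The shifted diagram `D_λ` of a strict partition (0-based coordinates). -/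
def shDiagram (l : Partn) : Set (ℕ × ℕ) := {p | p.1 ≤ p.2 ∧ p.2 < l.part p.1 + p.1}

/-- An elementary excitation inside `D_λ`: a box `x ∈ C` moves to `x + (1,1)` provided the
needed boxes lie in `D_λ \ C`. -/
def ExcStep (lam : Partn) (C C' : Set (ℕ × ℕ)) : Prop :=
  ∃ x ∈ C,
    ((x.1 = x.2 ∧ (x.1, x.2 + 1) ∈ shDiagram lam \ C ∧
        (x.1 + 1, x.2 + 1) ∈ shDiagram lam \ C) ∨
      (x.1 ≠ x.2 ∧ (x.1 + 1, x.2) ∈ shDiagram lam \ C ∧ (x.1, x.2 + 1) ∈ shDiagram lam \ C ∧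
        (x.1 + 1, x.2 + 1) ∈ shDiagram lam \ C)) ∧
    C' = insert (x.1 + 1, x.2 + 1) (C \ {x})

/-- The set `E_λ(μ)` of excited Young diagrams of `D_μ` inside `D_λ`. -/
def EYD (lam mu : Partn) : Set (Set (ℕ × ℕ)) :=
  {C | Relation.ReflTransGen (ExcStep lam) (shDiagram mu) C}
/-! ### Jeu de taquin for (unshifted) standard skew tableaux -/

/-- A filling of the plane by naturals; the value `0` denotes an empty box. -/
abbrev Filling := ℕ × ℕ → ℕ

/-- One elementary move of the hole during a jeu de taquin slide: the hole (first component)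
swaps with the smaller of the labels to its east and south (a missing label counts as
absent). -/
def HoleStep : (ℕ × ℕ) × Filling → (ℕ × ℕ) × Filling → Prop := fun s t =>
  (t.1 = (s.1.1, s.1.2 + 1) ∧ s.2 (s.1.1, s.1.2 + 1) ≠ 0 ∧
      (s.2 (s.1.1 + 1, s.1.2) = 0 ∨ s.2 (s.1.1, s.1.2 + 1) < s.2 (s.1.1 + 1, s.1.2)) ∧
      t.2 = Function.update (Function.update s.2 s.1 (s.2 (s.1.1, s.1.2 + 1)))
        (s.1.1, s.1.2 + 1) 0) ∨
  (t.1 = (s.1.1 + 1, s.1.2) ∧ s.2 (s.1.1 + 1, s.1.2) ≠ 0 ∧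
      (s.2 (s.1.1, s.1.2 + 1) = 0 ∨ s.2 (s.1.1 + 1, s.1.2) < s.2 (s.1.1, s.1.2 + 1)) ∧
      t.2 = Function.update (Function.update s.2 s.1 (s.2 (s.1.1 + 1, s.1.2)))
        (s.1.1 + 1, s.1.2) 0)

/-- The jeu de taquin slide of the filling `f` into the box `c`: iterate hole moves until
the hole has no labels to its east or south. -/
def SlideTo (f : Filling) (c : ℕ × ℕ) (f' : Filling) : Prop :=
  ∃ d : ℕ × ℕ, Relation.ReflTransGen HoleStep (c, f) (d, f') ∧
    f' (d.1, d.2 + 1) = 0 ∧ f' (d.1 + 1, d.2) = 0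

/-- `c` is an inner corner of the inner shape `S`: a maximally southeast box of `S`. -/
def IsInnerCorner (S : Set (ℕ × ℕ)) (c : ℕ × ℕ) : Prop :=
  c ∈ S ∧ (c.1 + 1, c.2) ∉ S ∧ (c.1, c.2 + 1) ∉ S

/-- One jeu de taquin slide step on a pair (inner shape, filling). -/
def JdtStep : Set (ℕ × ℕ) × Filling → Set (ℕ × ℕ) × Filling → Prop := fun s t =>
  ∃ c, IsInnerCorner s.1 c ∧ SlideTo s.2 c t.2 ∧ t.1 = s.1 \ {c}

/-- The filling `f`, whose inner shape is `S`, rectifies (by some sequence of jeu de taquin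
slides into inner corners) to the straight-shape filling `g`. -/
def RectifiesTo (S : Set (ℕ × ℕ)) (f g : Filling) : Prop :=
  Relation.ReflTransGen JdtStep (S, f) (∅, g)

/-- The (unshifted) Young diagram of a partition, as a set of boxes. -/
def yDiagram (l : Partn) : Set (ℕ × ℕ) := {p | p.2 < l.part p.1}

/-- `f` is a standard Young tableau of skew shape `ν/λ`: a bijective filling of the shape by
`1, …, |ν| − |λ|` with strictly increasing rows and columns. -/
def IsStdFilling (nu lam : Partn) (f : Filling) : Prop :=
  (∀ p : ℕ × ℕ, f p ≠ 0 ↔ InCell nu lam p.1 p.2) ∧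
  (∀ p q : ℕ × ℕ, f p ≠ 0 → f q ≠ 0 → f p = f q → p = q) ∧
  (∀ p, f p ≤ nu.size - lam.size) ∧
  (∀ m, 1 ≤ m → m ≤ nu.size - lam.size → ∃ p, f p = m) ∧
  (∀ i j, InCell nu lam i j → InCell nu lam i (j + 1) → f (i, j) < f (i, j + 1)) ∧
  (∀ i j, InCell nu lam i j → InCell nu lam (i + 1) j → f (i, j) < f (i + 1, j))

/-- The superstandard tableau `S_μ`: the boxes of `μ` are filled with `1, 2, 3, …` in
reading order, row by row. -/
def superStd (mu : Partn) : Filling := fun p =>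
  if p.2 < mu.part p.1 then (∑ k ∈ Finset.range p.1, mu.part k) + p.2 + 1 else 0

/-- Standardization of a semistandard skew tableau: entries equal to `k` are renumbered
left to right, after all entries smaller than `k`. -/
def standardize (nu lam : Partn) (T : ℕ → ℕ → ℕ) : Filling := fun p =>
  if InCell nu lam p.1 p.2 then
    Nat.card {q : ℕ × ℕ // InCell nu lam q.1 q.2 ∧
      (T q.1 q.2 < T p.1 p.2 ∨ (T q.1 q.2 = T p.1 p.2 ∧ q.2 < p.2))} + 1
  else 0

/-! ### Equivariant data for the orthogonal/Lagrangian Grassmannians -/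

/-- The substitution `α_1 ↦ 2γ_1`, `α_i ↦ γ_i` (`i > 1`), as an algebra map on polynomials
(variables indexed by `ℕ`, variable `0` playing the role of the first simple root). -/
def substA : MvPolynomial ℕ ℚ →ₐ[ℚ] MvPolynomial ℕ ℚ :=
  MvPolynomial.bind₁ (fun i => if i = 0 then 2 * MvPolynomial.X 0 else MvPolynomial.X i)

/-- A strict partition contained in the staircase `ρ_n`. -/
def InDom (n : ℕ) (p : Partn) : Prop := p.IsStrict ∧ Partn.le p (staircase n)

/-- The strict partitions inside `ρ_n` obtained from `λ` by adding one box. -/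
def addBox (n : ℕ) (lam : Partn) : Set Partn :=
  {pi | InDom n pi ∧ Partn.le lam pi ∧ pi.size = lam.size + 1}

/-- The strict partitions inside `ρ_n` obtained from `ν` by removing one box. -/
def subBox (n : ℕ) (nu : Partn) : Set Partn :=
  {rho | InDom n rho ∧ Partn.le rho nu ∧ rho.size + 1 = nu.size}
end

noncomputable section LRAux

open Finset

private lemma LRcell {nu lam : Partn} {i j : ℕ} :
    InCell nu lam i j ↔ lam.part i ≤ j ∧ j < nu.part i := Iff.rfl

private lemma LRdcIco {a b : ℕ} {s : Finset ℕ} (hsub : s ⊆ Finset.Ico a b)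
    (hdc : ∀ x ∈ s, ∀ y, a ≤ y → y ≤ x → y ∈ s) :
    s = Finset.Ico a (a + s.card) := by
  ext x
  simp only [Finset.mem_Ico]
  constructor
  · intro hx
    have hax : a ≤ x := (Finset.mem_Ico.mp (hsub hx)).1
    refine ⟨hax, ?_⟩
    have hss : Finset.Ico a (x + 1) ⊆ s := by
      intro y hy
      rw [Finset.mem_Ico] at hy
      exact hdc x hx y hy.1 (by omega)
    have hcc := Finset.card_le_card hss
    rw [Nat.card_Ico] at hcc
    omega
  · rintro ⟨hax, hx⟩
    by_contra hxs
    have hss : s ⊆ Finset.Ico a x := by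
      intro y hy
      have hy' := Finset.mem_Ico.mp (hsub hy)
      rw [Finset.mem_Ico]
      refine ⟨hy'.1, ?_⟩
      by_contra hxy
      exact hxs (hdc y hy x hax (by omega))
    have hcc := Finset.card_le_card hss
    rw [Nat.card_Ico] at hcc
    omega

private lemma LRpart_lt (l : Partn) (i : ℕ) : l.part i ≠ 0 ↔ i < l.numParts := by
  obtain ⟨N, hN⟩ := l.bounded'
  have hsub : (Finset.range N).filter (fun j => l.part j ≠ 0) ⊆ Finset.Ico 0 N := by
    intro x hx
    rw [Finset.mem_Ico]
    rw [Finset.mem_filter, Finset.mem_range] at hx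
    omega
  have hdc : ∀ x ∈ (Finset.range N).filter (fun j => l.part j ≠ 0), ∀ y, 0 ≤ y → y ≤ x →
      y ∈ (Finset.range N).filter (fun j => l.part j ≠ 0) := by
    intro x hx y _ hyx
    rw [Finset.mem_filter, Finset.mem_range] at hx ⊢
    have := l.antitone' hyx
    exact ⟨by omega, by omega⟩
  have hIco := LRdcIco hsub hdc
  have hcard : l.numParts = ((Finset.range N).filter (fun j => l.part j ≠ 0)).card := by
    have h1 : Nat.card {j : ℕ // l.part j ≠ 0} = Set.ncard {j : ℕ | l.part j ≠ 0} :=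
      Nat.card_coe_set_eq _
    have h2 : {j : ℕ | l.part j ≠ 0} = ↑((Finset.range N).filter (fun j => l.part j ≠ 0)) := by
      ext j
      simp only [Set.mem_setOf_eq, Finset.coe_filter, Finset.mem_range, Set.mem_setOf_eq]
      constructor
      · intro hj
        exact ⟨by by_contra hc; exact hj (hN j (by omega)), hj⟩
      · exact fun hj => hj.2
    have h3 : l.numParts = Nat.card {j : ℕ // l.part j ≠ 0} := rfl
    rw [h3, h1, h2, Set.ncard_coe_finset]
  constructor
  · intro hi
    have hiN : i < N := by by_contra hc; exact hi (hN i (by omega))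
    have hmem : i ∈ (Finset.range N).filter (fun j => l.part j ≠ 0) := by
      rw [Finset.mem_filter, Finset.mem_range]
      exact ⟨hiN, hi⟩
    rw [hIco, Finset.mem_Ico] at hmem
    omega
  · intro hi
    have hmem : i ∈ (Finset.range N).filter (fun j => l.part j ≠ 0) := by
      rw [hIco, Finset.mem_Ico]
      omega
    rw [Finset.mem_filter] at hmem
    exact hmem.2

private lemma LRsize_eq (l : Partn) {n : ℕ} (hn : l.numParts ≤ n) :
    l.size = ∑ i ∈ Finset.range n, l.part i := by
  have h3 : l.size = ∑' i, l.part i := rfl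
  rw [h3]
  refine tsum_eq_sum ?_
  intro i hi
  rw [Finset.mem_range, not_lt] at hi
  by_contra hne
  have := (LRpart_lt l i).mp hne
  omega

private lemma LRmem_filter {s : Finset ℕ} {p : ℕ → Prop} (hp : DecidablePred p) {c : ℕ} :
    c ∈ @Finset.filter ℕ p hp s ↔ c ∈ s ∧ p c := Finset.mem_filter

private lemma LRcard_eq {s t : Finset ℕ} {p q : ℕ → Prop}
    (hp : DecidablePred p) (hq : DecidablePred q)
    (h : ∀ c, (c ∈ s ∧ p c) ↔ (c ∈ t ∧ q c)) :
    (@Finset.filter ℕ p hp s).card = (@Finset.filter ℕ q hq t).card := by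
  have he : @Finset.filter ℕ p hp s = @Finset.filter ℕ q hq t := Finset.ext fun c => by
    rw [Finset.mem_filter, Finset.mem_filter]
    exact h c
  rw [he]

private lemma LRsplit {Q : ℕ → ℕ → Prop} {M B : ℕ}
    (hmem : ∀ a b, Q a b → a < M ∧ b < B) :
    Nat.card {p : ℕ × ℕ // Q p.1 p.2}
      = ∑ a ∈ Finset.range M, ((Finset.range B).filter (fun b => Q a b)).card := by
  have h1 : Nat.card {p : ℕ × ℕ // Q p.1 p.2} = Set.ncard {p : ℕ × ℕ | Q p.1 p.2} :=
    Nat.card_coe_set_eq _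
  have hset : {p : ℕ × ℕ | Q p.1 p.2}
      = ↑(((Finset.range M) ×ˢ (Finset.range B)).filter (fun p => Q p.1 p.2)) := by
    ext p
    simp only [Set.mem_setOf_eq, Finset.coe_filter, Finset.mem_product, Finset.mem_range,
      Set.mem_setOf_eq]
    constructor
    · intro hp
      exact ⟨hmem p.1 p.2 hp, hp⟩
    · exact fun hp => hp.2
  rw [h1, hset, Set.ncard_coe_finset, Finset.card_filter, Finset.sum_product]
  exact Finset.sum_congr rfl fun a _ => (Finset.card_filter _ _).symm

private lemma LRcard_split (s : Finset ℕ) (f : ℕ → ℕ) (h1 : ∀ j ∈ s, 1 ≤ f j) (m : ℕ) :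
    (s.filter (fun j => f j ≤ m)).card
      = ∑ k ∈ Finset.range m, (s.filter (fun j => f j = k + 1)).card := by
  induction m with
  | zero =>
    rw [Finset.range_zero, Finset.sum_empty, Finset.card_eq_zero, Finset.filter_eq_empty_iff]
    intro j hj
    have := h1 j hj
    omega
  | succ m ih =>
    rw [Finset.sum_range_succ, ← ih]
    have hun : s.filter (fun j => f j ≤ m + 1)
        = (s.filter (fun j => f j ≤ m)) ∪ (s.filter (fun j => f j = m + 1)) := by
      rw [← Finset.filter_or]
      ext j
      simp only [Finset.mem_filter]
      constructor
      · rintro ⟨hj, hf⟩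
        exact ⟨hj, by omega⟩
      · rintro ⟨hj, hf⟩
        exact ⟨hj, by omega⟩
    rw [hun, Finset.card_union_of_disjoint]
    rw [Finset.disjoint_left]
    intro j hj hj'
    rw [Finset.mem_filter] at hj hj'
    omega

private lemma LRsum_if {i M : ℕ} (hM : i < M) (A : ℕ → ℕ) (B : ℕ) :
    (∑ i' ∈ Finset.range M, (if i' < i then A i' else if i' = i then B else 0))
      = (∑ i' ∈ Finset.range i, A i') + B := by
  induction M with
  | zero => exact absurd hM (Nat.not_lt_zero i)
  | succ M ih =>
    rcases Nat.lt_or_ge i M with h | h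
    · rw [Finset.sum_range_succ, ih h, if_neg (by omega), if_neg (by omega), add_zero]
    · have hiM : i = M := by omega
      subst hiM
      rw [Finset.sum_range_succ, if_neg (lt_irrefl _), if_pos rfl]
      congr 1
      exact Finset.sum_congr rfl fun x hx => if_pos (Finset.mem_range.mp hx)

/-- number of entries equal to `k` in row `i`. -/
private def LRrowcnt (lam nu : Partn) (T : ℕ → ℕ → ℕ) (i k : ℕ) : ℕ :=
  ((Finset.Ico (lam.part i) (nu.part i)).filter (fun j => T i j = k)).card

/-- number of entries equal to `k` in row `i` at columns `≥ j`. -/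
private def LRtailcnt (lam nu : Partn) (T : ℕ → ℕ → ℕ) (i j k : ℕ) : ℕ :=
  ((Finset.Ico (lam.part i) (nu.part i)).filter (fun c => j ≤ c ∧ T i c = k)).card

private lemma LRcontent_eq (lam nu : Partn) (T : ℕ → ℕ → ℕ) (k : ℕ) :
    contentCount nu lam T k = ∑ i ∈ Finset.range nu.numParts, LRrowcnt lam nu T i k := by
  have hmem : ∀ a b, (InCell nu lam a b ∧ T a b = k) → a < nu.numParts ∧ b < nu.part 0 := by
    rintro a b ⟨hc, -⟩
    have h2 := (LRcell.mp hc).2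
    have h1 : a < nu.numParts := (LRpart_lt nu a).mp (by omega)
    have h3 := nu.antitone' (Nat.zero_le a)
    exact ⟨h1, by omega⟩
  rw [contentCount, LRsplit hmem]
  refine Finset.sum_congr rfl fun a _ => ?_
  rw [LRrowcnt]
  refine LRcard_eq _ _ fun c => ?_
  simp only [Finset.mem_range, Finset.mem_Ico]
  constructor
  · rintro ⟨-, hc, hv⟩
    exact ⟨LRcell.mp hc, hv⟩
  · rintro ⟨hc, hv⟩
    have := nu.antitone' (Nat.zero_le a)
    exact ⟨by omega, LRcell.mpr hc, hv⟩

private lemma LRprefix_eq (lam nu : Partn) (T : ℕ → ℕ → ℕ) (i j k : ℕ) :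
    prefixCount nu lam T i j k
      = (∑ i' ∈ Finset.range i, LRrowcnt lam nu T i' k) + LRtailcnt lam nu T i j k := by
  have hmem : ∀ a b, (InCell nu lam a b ∧ T a b = k ∧ (a < i ∨ (a = i ∧ j ≤ b))) →
      a < max (i + 1) nu.numParts ∧ b < nu.part 0 := by
    rintro a b ⟨hc, -, -⟩
    have h2 := (LRcell.mp hc).2
    have h1 : a < nu.numParts := (LRpart_lt nu a).mp (by omega)
    have h3 := nu.antitone' (Nat.zero_le a)
    have h4 : nu.numParts ≤ max (i + 1) nu.numParts := le_max_right _ _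
    exact ⟨by omega, by omega⟩
  rw [prefixCount, LRsplit hmem]
  refine Eq.trans (Finset.sum_congr rfl fun a ha => ?_)
    (LRsum_if (lt_of_lt_of_le (Nat.lt_succ_self i) (le_max_left _ _)) _ _)
  by_cases h1 : a < i
  · rw [if_pos h1, LRrowcnt]
    refine LRcard_eq _ _ fun c => ?_
    simp only [Finset.mem_range, Finset.mem_Ico]
    constructor
    · rintro ⟨-, hc, hv, -⟩
      exact ⟨LRcell.mp hc, hv⟩
    · rintro ⟨hc, hv⟩
      have := nu.antitone' (Nat.zero_le a)
      exact ⟨by omega, LRcell.mpr hc, hv, Or.inl h1⟩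
  · by_cases h2 : a = i
    · subst h2
      rw [if_neg h1, if_pos rfl, LRtailcnt]
      refine LRcard_eq _ _ fun c => ?_
      simp only [Finset.mem_range, Finset.mem_Ico]
      constructor
      · rintro ⟨-, hc, hv, hor⟩
        rcases hor with hlt | ⟨-, hj⟩
        · omega
        · exact ⟨LRcell.mp hc, hj, hv⟩
      · rintro ⟨hc, hj, hv⟩
        have := nu.antitone' (Nat.zero_le a)
        exact ⟨by omega, LRcell.mpr hc, hv, Or.inr ⟨trivial, hj⟩⟩
    · rw [if_neg h1, if_neg h2]
      refine Finset.card_eq_zero.mpr (Finset.eq_empty_iff_forall_notMem.mpr fun c hc => ?_)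
      obtain ⟨-, -, -, hor⟩ := (LRmem_filter _).mp hc
      rcases hor with hlt | ⟨heq, -⟩
      · omega
      · omega

private lemma LRrow_mono {lam nu : Partn} {T : ℕ → ℕ → ℕ}
    (hrow : ∀ i j, InCell nu lam i j → InCell nu lam i (j + 1) → T i j ≤ T i (j + 1))
    {i a : ℕ} (hla : lam.part i ≤ a) :
    ∀ b, a ≤ b → b < nu.part i → T i a ≤ T i b := by
  intro b
  induction b with
  | zero =>
    intro h1 _
    have ha0 : a = 0 := Nat.le_zero.mp h1
    rw [ha0]
  | succ b ih =>
    intro h1 h2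
    rcases Nat.eq_or_lt_of_le h1 with he | hlt
    · rw [he]
    · have hb : b < nu.part i := by omega
      have hab : a ≤ b := by omega
      exact le_trans (ih hab hb)
        (hrow i b (LRcell.mpr ⟨by omega, hb⟩) (LRcell.mpr ⟨by omega, h2⟩))

private lemma LRfilter_le {lam nu : Partn} {T : ℕ → ℕ → ℕ}
    (hrow : ∀ i j, InCell nu lam i j → InCell nu lam i (j + 1) → T i j ≤ T i (j + 1))
    (i m : ℕ) :
    (Finset.Ico (lam.part i) (nu.part i)).filter (fun j => T i j ≤ m)
      = Finset.Ico (lam.part i)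
          (lam.part i
            + ((Finset.Ico (lam.part i) (nu.part i)).filter (fun j => T i j ≤ m)).card) := by
  apply LRdcIco (Finset.filter_subset _ _)
  intro x hx y hy1 hy2
  rw [Finset.mem_filter, Finset.mem_Ico] at hx ⊢
  exact ⟨⟨hy1, by omega⟩, le_trans (LRrow_mono hrow hy1 x hy2 hx.1.2) hx.2⟩

/-! ### The forward map -/

private def LRfmap (lam nu : Partn) (T : ℕ → ℕ → ℕ) (k i : ℕ) : ℝ :=
  (LRrowcnt lam nu T i (k + 1) : ℝ)

section ADir

variable {lam mu nu : Partn} {T : ℕ → ℕ → ℕ}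

private lemma LRmemA (hT : T ∈ LRset lam mu nu) :
    IsSSYT nu lam T ∧ (∀ k, contentCount nu lam T (k + 1) = mu.part k) ∧ IsBallot nu lam T := hT

private lemma LRssytA (hT : T ∈ LRset lam mu nu) :
    (∀ i j, ¬ InCell nu lam i j → T i j = 0) ∧
    (∀ i j, InCell nu lam i j → 1 ≤ T i j) ∧
    (∀ i j, InCell nu lam i j → InCell nu lam i (j + 1) → T i j ≤ T i (j + 1)) ∧
    (∀ i j, InCell nu lam i j → InCell nu lam (i + 1) j → T i j < T (i + 1) j) := (LRmemA hT).1

private lemma LRval_le (hT : T ∈ LRset lam mu nu) {i j : ℕ} (hc : InCell nu lam i j) :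
    T i j ≤ mu.numParts := by
  by_contra hgt
  push_neg at hgt
  have hpos := (LRssytA hT).2.1 i j hc
  have hcc := (LRmemA hT).2.1 (T i j - 1)
  rw [LRcontent_eq] at hcc
  have hmu : mu.part (T i j - 1) = 0 := by
    by_contra hne
    have := (LRpart_lt mu (T i j - 1)).mp hne
    omega
  rw [hmu] at hcc
  have hiN : i ∈ Finset.range nu.numParts := by
    rw [Finset.mem_range]
    exact (LRpart_lt nu i).mp (by have := (LRcell.mp hc).2; omega)
  have hz := Finset.sum_eq_zero_iff.mp hcc i hiN
  rw [LRrowcnt, Finset.card_eq_zero, Finset.filter_eq_empty_iff] at hz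
  exact hz (Finset.mem_Ico.mpr (LRcell.mp hc)) (by omega)

private lemma LRrowcnt0 (hT : T ∈ LRset lam mu nu) (i k : ℕ)
    (hki : mu.numParts ≤ k ∨ nu.numParts ≤ i) :
    LRrowcnt lam nu T i (k + 1) = 0 := by
  rw [LRrowcnt, Finset.card_eq_zero, Finset.filter_eq_empty_iff]
  intro j hj
  rw [Finset.mem_Ico] at hj
  rcases hki with hk | hi
  · have := LRval_le hT (LRcell.mpr hj)
    omega
  · have hz : nu.part i = 0 := by
      by_contra hne
      have := (LRpart_lt nu i).mp hne
      omega
    omega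

private lemma LRrowfull (hT : T ∈ LRset lam mu nu) (i : ℕ) :
    ∑ k ∈ Finset.range mu.numParts, LRrowcnt lam nu T i (k + 1)
      = nu.part i - lam.part i := by
  have h1 : ∀ j ∈ Finset.Ico (lam.part i) (nu.part i), 1 ≤ T i j :=
    fun j hj => (LRssytA hT).2.1 i j (LRcell.mpr (Finset.mem_Ico.mp hj))
  have e1 : (∑ k ∈ Finset.range mu.numParts, LRrowcnt lam nu T i (k + 1))
      = ∑ k ∈ Finset.range mu.numParts,
          ((Finset.Ico (lam.part i) (nu.part i)).filter (fun j => T i j = k + 1)).card := rfl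
  rw [e1, ← LRcard_split _ _ h1,
    Finset.filter_true_of_mem (fun j hj => LRval_le hT (LRcell.mpr (Finset.mem_Ico.mp hj))),
    Nat.card_Ico]

private lemma LRsub (h : lam.size + mu.size = nu.size) (hT : T ∈ LRset lam mu nu) (i : ℕ) :
    lam.part i ≤ nu.part i := by
  have hmu : mu.size = ∑ i' ∈ Finset.range nu.numParts, (nu.part i' - lam.part i') := by
    rw [LRsize_eq mu le_rfl]
    calc ∑ k ∈ Finset.range mu.numParts, mu.part k
        = ∑ k ∈ Finset.range mu.numParts,
            ∑ i' ∈ Finset.range nu.numParts, LRrowcnt lam nu T i' (k + 1) := by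
          refine Finset.sum_congr rfl fun k _ => ?_
          rw [← (LRmemA hT).2.1 k, LRcontent_eq]
      _ = ∑ i' ∈ Finset.range nu.numParts,
            ∑ k ∈ Finset.range mu.numParts, LRrowcnt lam nu T i' (k + 1) := Finset.sum_comm
      _ = ∑ i' ∈ Finset.range nu.numParts, (nu.part i' - lam.part i') :=
          Finset.sum_congr rfl fun i' _ => LRrowfull hT i'
  have hnu : nu.size = ∑ i' ∈ Finset.range (max nu.numParts lam.numParts), nu.part i' :=
    LRsize_eq nu (le_max_left _ _)
  have hlam : lam.size = ∑ i' ∈ Finset.range (max nu.numParts lam.numParts), lam.part i' :=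
    LRsize_eq lam (le_max_right _ _)
  have hmu' : mu.size
      = ∑ i' ∈ Finset.range (max nu.numParts lam.numParts), (nu.part i' - lam.part i') := by
    rw [hmu]
    refine Finset.sum_subset (Finset.range_subset_range.mpr (le_max_left _ _)) ?_
    intro x _ hnx
    rw [Finset.mem_range] at hnx
    have hz : nu.part x = 0 := by
      by_contra hne
      have := (LRpart_lt nu x).mp hne
      omega
    omega
  have key : ∀ i' ∈ Finset.range (max nu.numParts lam.numParts),
      nu.part i' ≤ (nu.part i' - lam.part i') + lam.part i' := fun i' _ => by omega
  have htot : (∑ i' ∈ Finset.range (max nu.numParts lam.numParts), nu.part i')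
      = ∑ i' ∈ Finset.range (max nu.numParts lam.numParts),
          ((nu.part i' - lam.part i') + lam.part i') := by
    rw [Finset.sum_add_distrib]
    omega
  have hpt := (Finset.sum_eq_sum_iff_of_le key).mp htot
  rcases Nat.lt_or_ge i (max nu.numParts lam.numParts) with hi | hi
  · have := hpt i (Finset.mem_range.mpr hi)
    omega
  · have hz : lam.part i = 0 := by
      by_contra hne
      have := (LRpart_lt lam i).mp hne
      omega
    omega

private lemma LRnatD (hT : T ∈ LRset lam mu nu) (i k : ℕ) :
    lam.part (i + 1) + ∑ m ∈ Finset.range (k + 1), LRrowcnt lam nu T (i + 1) (m + 1)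
      ≤ lam.part i + ∑ m ∈ Finset.range k, LRrowcnt lam nu T i (m + 1) := by
  have hrow := (LRssytA hT).2.2.1
  have hcol := (LRssytA hT).2.2.2
  have hpos := (LRssytA hT).2.1
  have h11 : ∀ j ∈ Finset.Ico (lam.part (i + 1)) (nu.part (i + 1)), 1 ≤ T (i + 1) j :=
    fun j hj => hpos _ j (LRcell.mpr (Finset.mem_Ico.mp hj))
  have h10 : ∀ j ∈ Finset.Ico (lam.part i) (nu.part i), 1 ≤ T i j :=
    fun j hj => hpos _ j (LRcell.mpr (Finset.mem_Ico.mp hj))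
  have e1 : (∑ m ∈ Finset.range (k + 1), LRrowcnt lam nu T (i + 1) (m + 1))
      = ((Finset.Ico (lam.part (i + 1)) (nu.part (i + 1))).filter
          (fun j => T (i + 1) j ≤ k + 1)).card := (LRcard_split _ _ h11 (k + 1)).symm
  have e0 : (∑ m ∈ Finset.range k, LRrowcnt lam nu T i (m + 1))
      = ((Finset.Ico (lam.part i) (nu.part i)).filter (fun j => T i j ≤ k)).card :=
    (LRcard_split _ _ h10 k).symm
  rw [e1, e0]
  set c1 := ((Finset.Ico (lam.part (i + 1)) (nu.part (i + 1))).filter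
      (fun j => T (i + 1) j ≤ k + 1)).card with hc1
  set c0 := ((Finset.Ico (lam.part i) (nu.part i)).filter (fun j => T i j ≤ k)).card with hc0
  by_contra hcon
  push_neg at hcon
  have hanti : lam.part (i + 1) ≤ lam.part i := lam.antitone' (Nat.le_succ i)
  have hnanti : nu.part (i + 1) ≤ nu.part i := nu.antitone' (Nat.le_succ i)
  have hseg1 := LRfilter_le hrow (i + 1) (k + 1)
  have hseg0 := LRfilter_le hrow i k
  rw [← hc1] at hseg1
  rw [← hc0] at hseg0
  have hc1pos : 1 ≤ c1 := by omega
  have hcmem : lam.part (i + 1) + c1 - 1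
      ∈ (Finset.Ico (lam.part (i + 1)) (nu.part (i + 1))).filter
          (fun j => T (i + 1) j ≤ k + 1) := by
    rw [hseg1, Finset.mem_Ico]
    omega
  rw [Finset.mem_filter, Finset.mem_Ico] at hcmem
  obtain ⟨⟨hcl, hcr⟩, hcv⟩ := hcmem
  have hicell : InCell nu lam i (lam.part (i + 1) + c1 - 1) :=
    LRcell.mpr ⟨by omega, by omega⟩
  have hccell : InCell nu lam (i + 1) (lam.part (i + 1) + c1 - 1) := LRcell.mpr ⟨hcl, hcr⟩
  have hlt := hcol _ _ hicell hccell
  have hmem0 : lam.part (i + 1) + c1 - 1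
      ∈ (Finset.Ico (lam.part i) (nu.part i)).filter (fun j => T i j ≤ k) :=
    Finset.mem_filter.mpr ⟨Finset.mem_Ico.mpr ⟨by omega, by omega⟩, by omega⟩
  rw [hseg0, Finset.mem_Ico] at hmem0
  omega

private lemma LRnatE (hT : T ∈ LRset lam mu nu) (i k : ℕ) :
    LRrowcnt lam nu T i (k + 1 + 1) + ∑ i' ∈ Finset.range i, LRrowcnt lam nu T i' (k + 1 + 1)
      ≤ ∑ i' ∈ Finset.range i, LRrowcnt lam nu T i' (k + 1) := by
  have hrow := (LRssytA hT).2.2.1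
  have hseg := LRfilter_le hrow i (k + 1)
  have hb := (LRmemA hT).2.2 i
    (lam.part i
      + ((Finset.Ico (lam.part i) (nu.part i)).filter (fun j => T i j ≤ k + 1)).card)
    (k + 1) (by omega)
  rw [LRprefix_eq, LRprefix_eq] at hb
  have ht2 : LRtailcnt lam nu T i
      (lam.part i
        + ((Finset.Ico (lam.part i) (nu.part i)).filter (fun j => T i j ≤ k + 1)).card)
      (k + 1 + 1) = LRrowcnt lam nu T i (k + 1 + 1) := by
    rw [LRtailcnt, LRrowcnt]
    refine LRcard_eq _ _ fun c => ?_
    simp only [Finset.mem_Ico]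
    constructor
    · rintro ⟨hc, -, hv⟩
      exact ⟨hc, hv⟩
    · rintro ⟨hc, hv⟩
      refine ⟨hc, ?_, hv⟩
      by_contra hltc
      push_neg at hltc
      have hcseg : c ∈ (Finset.Ico (lam.part i) (nu.part i)).filter (fun j => T i j ≤ k + 1) := by
        rw [hseg, Finset.mem_Ico]
        omega
      rw [Finset.mem_filter] at hcseg
      omega
  have ht1 : LRtailcnt lam nu T i
      (lam.part i
        + ((Finset.Ico (lam.part i) (nu.part i)).filter (fun j => T i j ≤ k + 1)).card)
      (k + 1) = 0 := by
    rw [LRtailcnt, Finset.card_eq_zero, Finset.filter_eq_empty_iff]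
    rintro c hcm ⟨hac, hv⟩
    have hcseg : c ∈ (Finset.Ico (lam.part i) (nu.part i)).filter (fun j => T i j ≤ k + 1) :=
      Finset.mem_filter.mpr ⟨hcm, by omega⟩
    rw [hseg, Finset.mem_Ico] at hcseg
    omega
  rw [ht2, ht1, add_zero] at hb
  omega

private lemma LRfmap_mem (h : lam.size + mu.size = nu.size) (hT : T ∈ LRset lam mu nu) :
    InLRPolytope lam mu nu (LRfmap lam nu T) := by
  have hpoly : (∀ k i, (mu.numParts ≤ k ∨ nu.numParts ≤ i) → LRfmap lam nu T k i = 0) ∧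
      (∀ k i, 0 ≤ LRfmap lam nu T k i) ∧
      (∀ i, (lam.part i : ℝ) + ∑ k ∈ Finset.range mu.numParts, LRfmap lam nu T k i
        = (nu.part i : ℝ)) ∧
      (∀ k, ∑ i ∈ Finset.range nu.numParts, LRfmap lam nu T k i = (mu.part k : ℝ)) ∧
      (∀ i k, (lam.part (i + 1) : ℝ) + ∑ j ∈ Finset.range (k + 1), LRfmap lam nu T j (i + 1)
          ≤ (lam.part i : ℝ) + ∑ j ∈ Finset.range k, LRfmap lam nu T j i) ∧
      (∀ i k, LRfmap lam nu T (k + 1) i + ∑ i' ∈ Finset.range i, LRfmap lam nu T (k + 1) i'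
          ≤ ∑ i' ∈ Finset.range i, LRfmap lam nu T k i') := by
    refine ⟨?_, ?_, ?_, ?_, ?_, ?_⟩
    · intro k i hki
      rw [LRfmap, LRrowcnt0 hT i k hki, Nat.cast_zero]
    · intro k i
      rw [LRfmap]
      exact Nat.cast_nonneg _
    · intro i
      have hnat : lam.part i + ∑ k ∈ Finset.range mu.numParts, LRrowcnt lam nu T i (k + 1)
          = nu.part i := by
        rw [LRrowfull hT i]
        have := LRsub h hT i
        omega
      simp only [LRfmap]
      exact_mod_cast hnat
    · intro k
      have hnat : (∑ i ∈ Finset.range nu.numParts, LRrowcnt lam nu T i (k + 1)) = mu.part k := by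
        rw [← LRcontent_eq]
        exact (LRmemA hT).2.1 k
      simp only [LRfmap]
      exact_mod_cast hnat
    · intro i k
      have hnat := LRnatD hT i k
      simp only [LRfmap]
      exact_mod_cast hnat
    · intro i k
      have hnat := LRnatE hT i k
      simp only [LRfmap]
      exact_mod_cast hnat
  exact hpoly

private lemma LRfmap_inj (hT : T ∈ LRset lam mu nu) {T' : ℕ → ℕ → ℕ}
    (hT' : T' ∈ LRset lam mu nu) (he : LRfmap lam nu T = LRfmap lam nu T') : T = T' := by
  have hrc : ∀ i v, LRrowcnt lam nu T i (v + 1) = LRrowcnt lam nu T' i (v + 1) := by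
    intro i v
    have hcf := congrFun (congrFun he v) i
    rw [LRfmap, LRfmap] at hcf
    exact_mod_cast hcf
  have hrow := (LRssytA hT).2.2.1
  have hrow' := (LRssytA hT').2.2.1
  have hfil : ∀ i m, (Finset.Ico (lam.part i) (nu.part i)).filter (fun j => T i j ≤ m)
      = (Finset.Ico (lam.part i) (nu.part i)).filter (fun j => T' i j ≤ m) := by
    intro i m
    have h1 : ∀ j ∈ Finset.Ico (lam.part i) (nu.part i), 1 ≤ T i j :=
      fun j hj => (LRssytA hT).2.1 i j (LRcell.mpr (Finset.mem_Ico.mp hj))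
    have h1' : ∀ j ∈ Finset.Ico (lam.part i) (nu.part i), 1 ≤ T' i j :=
      fun j hj => (LRssytA hT').2.1 i j (LRcell.mpr (Finset.mem_Ico.mp hj))
    have hcard : ((Finset.Ico (lam.part i) (nu.part i)).filter (fun j => T i j ≤ m)).card
        = ((Finset.Ico (lam.part i) (nu.part i)).filter (fun j => T' i j ≤ m)).card := by
      rw [LRcard_split _ _ h1 m, LRcard_split _ _ h1' m]
      exact Finset.sum_congr rfl fun v _ => hrc i v
    rw [LRfilter_le hrow i m, LRfilter_le hrow' i m, hcard]
  funext i j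
  by_cases hc : InCell nu lam i j
  · have hmem : j ∈ Finset.Ico (lam.part i) (nu.part i) := Finset.mem_Ico.mpr (LRcell.mp hc)
    have h1 : T i j ≤ T' i j := by
      have hm : j ∈ (Finset.Ico (lam.part i) (nu.part i)).filter (fun c => T' i c ≤ T' i j) :=
        Finset.mem_filter.mpr ⟨hmem, le_rfl⟩
      rw [← hfil i (T' i j)] at hm
      exact (Finset.mem_filter.mp hm).2
    have h2 : T' i j ≤ T i j := by
      have hm : j ∈ (Finset.Ico (lam.part i) (nu.part i)).filter (fun c => T i c ≤ T i j) :=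
        Finset.mem_filter.mpr ⟨hmem, le_rfl⟩
      rw [hfil i (T i j)] at hm
      exact (Finset.mem_filter.mp hm).2
    omega
  · rw [(LRssytA hT).1 i j hc, (LRssytA hT').1 i j hc]

end ADir

/-! ### The inverse map -/

private def LRn (r : ℕ → ℕ → ℝ) (k i : ℕ) : ℕ := (⌊r k i⌋).toNat

private def LRpsum (r : ℕ → ℕ → ℝ) (m i : ℕ) : ℕ := ∑ k ∈ Finset.range m, LRn r k i

private def LRg (lam nu : Partn) (r : ℕ → ℕ → ℝ) (i j : ℕ) : ℕ :=
  if h : InCell nu lam i j ∧ ∃ m, j < lam.part i + LRpsum r (m + 1) i then Nat.find h.2 + 1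
  else 0

section BDir

variable {lam mu nu : Partn} {r : ℕ → ℕ → ℝ}

private lemma LRpoly (hr : InLRPolytope lam mu nu r) :
    (∀ k i, (mu.numParts ≤ k ∨ nu.numParts ≤ i) → r k i = 0) ∧
    (∀ k i, 0 ≤ r k i) ∧
    (∀ i, (lam.part i : ℝ) + ∑ k ∈ Finset.range mu.numParts, r k i = (nu.part i : ℝ)) ∧
    (∀ k, ∑ i ∈ Finset.range nu.numParts, r k i = (mu.part k : ℝ)) ∧
    (∀ i k, (lam.part (i + 1) : ℝ) + ∑ j ∈ Finset.range (k + 1), r j (i + 1)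
        ≤ (lam.part i : ℝ) + ∑ j ∈ Finset.range k, r j i) ∧
    (∀ i k, r (k + 1) i + ∑ i' ∈ Finset.range i, r (k + 1) i'
        ≤ ∑ i' ∈ Finset.range i, r k i') := hr

private lemma LRn_cast (hr : InLRPolytope lam mu nu r)
    (hz : ∀ k i, ∃ z : ℤ, r k i = (z : ℝ)) (k i : ℕ) : (LRn r k i : ℝ) = r k i := by
  obtain ⟨z, hzz⟩ := hz k i
  have h0 : (0 : ℝ) ≤ r k i := (LRpoly hr).2.1 k i
  rw [hzz] at h0 ⊢
  have hz0 : 0 ≤ z := by exact_mod_cast h0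
  rw [LRn, hzz, Int.floor_intCast]
  exact_mod_cast Int.toNat_of_nonneg hz0

private lemma LRn_zero (hr : InLRPolytope lam mu nu r)
    (hz : ∀ k i, ∃ z : ℤ, r k i = (z : ℝ)) {k i : ℕ}
    (hki : mu.numParts ≤ k ∨ nu.numParts ≤ i) : LRn r k i = 0 := by
  have h1 : (LRn r k i : ℝ) = 0 := by
    rw [LRn_cast hr hz k i]
    exact (LRpoly hr).1 k i hki
  exact_mod_cast h1

private lemma LRpsum_mono (r : ℕ → ℕ → ℝ) {m m' : ℕ} (h : m ≤ m') (i : ℕ) :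
    LRpsum r m i ≤ LRpsum r m' i :=
  Finset.sum_le_sum_of_subset (Finset.range_subset_range.mpr h)

private lemma LRpsum_cast (hr : InLRPolytope lam mu nu r)
    (hz : ∀ k i, ∃ z : ℤ, r k i = (z : ℝ)) (m i : ℕ) :
    ((LRpsum r m i : ℕ) : ℝ) = ∑ k ∈ Finset.range m, r k i := by
  rw [LRpsum, Nat.cast_sum]
  exact Finset.sum_congr rfl fun k _ => LRn_cast hr hz k i

private lemma LRnB (hr : InLRPolytope lam mu nu r)
    (hz : ∀ k i, ∃ z : ℤ, r k i = (z : ℝ)) (i : ℕ) :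
    lam.part i + LRpsum r mu.numParts i = nu.part i := by
  have hB := (LRpoly hr).2.2.1 i
  rw [← LRpsum_cast hr hz mu.numParts i] at hB
  exact_mod_cast hB

private lemma LRnC (hr : InLRPolytope lam mu nu r)
    (hz : ∀ k i, ∃ z : ℤ, r k i = (z : ℝ)) (k : ℕ) :
    ∑ i ∈ Finset.range nu.numParts, LRn r k i = mu.part k := by
  have hC := (LRpoly hr).2.2.2.1 k
  have hs : ((∑ i ∈ Finset.range nu.numParts, LRn r k i : ℕ) : ℝ)
      = ∑ i ∈ Finset.range nu.numParts, r k i := by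
    rw [Nat.cast_sum]
    exact Finset.sum_congr rfl fun i _ => LRn_cast hr hz k i
  rw [← hs] at hC
  exact_mod_cast hC

private lemma LRnD (hr : InLRPolytope lam mu nu r)
    (hz : ∀ k i, ∃ z : ℤ, r k i = (z : ℝ)) (i k : ℕ) :
    lam.part (i + 1) + LRpsum r (k + 1) (i + 1) ≤ lam.part i + LRpsum r k i := by
  have hD := (LRpoly hr).2.2.2.2.1 i k
  rw [← LRpsum_cast hr hz (k + 1) (i + 1), ← LRpsum_cast hr hz k i] at hD
  exact_mod_cast hD

private lemma LRnE (hr : InLRPolytope lam mu nu r)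
    (hz : ∀ k i, ∃ z : ℤ, r k i = (z : ℝ)) (i k : ℕ) :
    LRn r (k + 1) i + ∑ i' ∈ Finset.range i, LRn r (k + 1) i'
      ≤ ∑ i' ∈ Finset.range i, LRn r k i' := by
  have hE := (LRpoly hr).2.2.2.2.2 i k
  have hs1 : ((∑ i' ∈ Finset.range i, LRn r (k + 1) i' : ℕ) : ℝ)
      = ∑ i' ∈ Finset.range i, r (k + 1) i' := by
    rw [Nat.cast_sum]
    exact Finset.sum_congr rfl fun i' _ => LRn_cast hr hz (k + 1) i'
  have hs2 : ((∑ i' ∈ Finset.range i, LRn r k i' : ℕ) : ℝ)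
      = ∑ i' ∈ Finset.range i, r k i' := by
    rw [Nat.cast_sum]
    exact Finset.sum_congr rfl fun i' _ => LRn_cast hr hz k i'
  rw [← LRn_cast hr hz (k + 1) i, ← hs1, ← hs2] at hE
  exact_mod_cast hE

private lemma LRpsum_le (hr : InLRPolytope lam mu nu r)
    (hz : ∀ k i, ∃ z : ℤ, r k i = (z : ℝ)) (m i : ℕ) :
    LRpsum r m i ≤ LRpsum r mu.numParts i := by
  rcases le_total m mu.numParts with h | h
  · exact LRpsum_mono r h i
  · have he : LRpsum r m i = LRpsum r mu.numParts i := by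
      have h1 : LRpsum r m i = LRpsum r mu.numParts i
          + ∑ k ∈ Finset.Ico mu.numParts m, LRn r k i := by
        simp only [LRpsum, Finset.range_eq_Ico]
        rw [← Finset.sum_Ico_consecutive _ (Nat.zero_le mu.numParts) h]
      have h2 : (∑ k ∈ Finset.Ico mu.numParts m, LRn r k i) = 0 :=
        Finset.sum_eq_zero fun k hk =>
          LRn_zero hr hz (Or.inl (Finset.mem_Ico.mp hk).1)
      omega
    omega

private lemma LRA_le (hr : InLRPolytope lam mu nu r)
    (hz : ∀ k i, ∃ z : ℤ, r k i = (z : ℝ)) (m i : ℕ) :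
    lam.part i + LRpsum r m i ≤ nu.part i := by
  have h1 := LRpsum_le hr hz m i
  have h2 := LRnB hr hz i
  omega

private lemma LRg_ex (hr : InLRPolytope lam mu nu r)
    (hz : ∀ k i, ∃ z : ℤ, r k i = (z : ℝ)) {i j : ℕ} (hc : InCell nu lam i j) :
    ∃ m, j < lam.part i + LRpsum r (m + 1) i := by
  refine ⟨mu.numParts, ?_⟩
  have h1 := LRnB hr hz i
  have h2 := LRpsum_mono r (Nat.le_add_right mu.numParts 1) i
  have h3 := (LRcell.mp hc).2
  omega

private lemma LRg_val (hr : InLRPolytope lam mu nu r)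
    (hz : ∀ k i, ∃ z : ℤ, r k i = (z : ℝ)) {i j m : ℕ} (hc : InCell nu lam i j) :
    LRg lam nu r i j = m + 1 ↔
      lam.part i + LRpsum r m i ≤ j ∧ j < lam.part i + LRpsum r (m + 1) i := by
  have hex : ∃ m', j < lam.part i + LRpsum r (m' + 1) i := LRg_ex hr hz hc
  have hg : LRg lam nu r i j = Nat.find hex + 1 := by
    rw [LRg, dif_pos (show InCell nu lam i j ∧ _ from ⟨hc, hex⟩)]
  rw [hg]
  constructor
  · intro he
    have hm : Nat.find hex = m := by omega
    have hspec := Nat.find_spec hex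
    rw [hm] at hspec
    refine ⟨?_, hspec⟩
    rcases Nat.eq_zero_or_pos m with h0 | hposm
    · subst h0
      have hps : LRpsum r 0 i = 0 := by simp [LRpsum]
      have := (LRcell.mp hc).1
      omega
    · by_contra hcon
      push_neg at hcon
      have hfind : Nat.find hex ≤ m - 1 := Nat.find_le (by
        show j < lam.part i + LRpsum r (m - 1 + 1) i
        have hms : m - 1 + 1 = m := by omega
        rw [hms]
        exact hcon)
      omega
  · rintro ⟨h1, h2⟩
    have hle : Nat.find hex ≤ m := Nat.find_le h2
    have hge : ¬ Nat.find hex < m := by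
      intro hlt
      have hspec := Nat.find_spec hex
      have hmono : LRpsum r (Nat.find hex + 1) i ≤ LRpsum r m i := LRpsum_mono r (by omega) i
      omega
    omega

private lemma LRrowcnt_g (hr : InLRPolytope lam mu nu r)
    (hz : ∀ k i, ∃ z : ℤ, r k i = (z : ℝ)) (i m : ℕ) :
    LRrowcnt lam nu (LRg lam nu r) i (m + 1) = LRn r m i := by
  have hfil : (Finset.Ico (lam.part i) (nu.part i)).filter (fun j => LRg lam nu r i j = m + 1)
      = Finset.Ico (lam.part i + LRpsum r m i) (lam.part i + LRpsum r (m + 1) i) := by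
    ext j
    simp only [Finset.mem_filter, Finset.mem_Ico]
    constructor
    · rintro ⟨hj, hv⟩
      exact (LRg_val hr hz (LRcell.mpr hj)).mp hv
    · rintro ⟨h1, h2⟩
      have h0 : LRpsum r 0 i = 0 := by simp [LRpsum]
      have hmono := LRpsum_mono r (Nat.zero_le m) i
      have hA := LRA_le hr hz (m + 1) i
      have hc : InCell nu lam i j := LRcell.mpr ⟨by omega, by omega⟩
      exact ⟨LRcell.mp hc, (LRg_val hr hz hc).mpr ⟨h1, h2⟩⟩
  rw [LRrowcnt, hfil, Nat.card_Ico]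
  have hs : LRpsum r (m + 1) i = LRpsum r m i + LRn r m i := Finset.sum_range_succ _ _
  omega

private lemma LRtailcnt_g (hr : InLRPolytope lam mu nu r)
    (hz : ∀ k i, ∃ z : ℤ, r k i = (z : ℝ)) (i j m : ℕ) :
    LRtailcnt lam nu (LRg lam nu r) i j (m + 1)
      = (lam.part i + LRpsum r (m + 1) i) - max j (lam.part i + LRpsum r m i) := by
  have hfil : (Finset.Ico (lam.part i) (nu.part i)).filter
        (fun c => j ≤ c ∧ LRg lam nu r i c = m + 1)
      = Finset.Ico (max j (lam.part i + LRpsum r m i)) (lam.part i + LRpsum r (m + 1) i) := by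
    ext c
    simp only [Finset.mem_filter, Finset.mem_Ico, max_le_iff]
    constructor
    · rintro ⟨hcm, hjc, hv⟩
      have := (LRg_val hr hz (LRcell.mpr hcm)).mp hv
      exact ⟨⟨hjc, this.1⟩, this.2⟩
    · rintro ⟨⟨hjc, hAc⟩, hcb⟩
      have h0 : LRpsum r 0 i = 0 := by simp [LRpsum]
      have hmono := LRpsum_mono r (Nat.zero_le m) i
      have hA := LRA_le hr hz (m + 1) i
      have hc : InCell nu lam i c := LRcell.mpr ⟨by omega, by omega⟩
      exact ⟨LRcell.mp hc, hjc, (LRg_val hr hz hc).mpr ⟨hAc, hcb⟩⟩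
  rw [LRtailcnt, hfil, Nat.card_Ico]

private lemma LRg_ssyt (hr : InLRPolytope lam mu nu r)
    (hz : ∀ k i, ∃ z : ℤ, r k i = (z : ℝ)) : IsSSYT nu lam (LRg lam nu r) := by
  have hssyt : (∀ i j, ¬ InCell nu lam i j → LRg lam nu r i j = 0) ∧
      (∀ i j, InCell nu lam i j → 1 ≤ LRg lam nu r i j) ∧
      (∀ i j, InCell nu lam i j → InCell nu lam i (j + 1) →
        LRg lam nu r i j ≤ LRg lam nu r i (j + 1)) ∧
      (∀ i j, InCell nu lam i j → InCell nu lam (i + 1) j →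
        LRg lam nu r i j < LRg lam nu r (i + 1) j) := by
    refine ⟨?_, ?_, ?_, ?_⟩
    · intro i j hc
      rw [LRg, dif_neg]
      rintro ⟨hcc, -⟩
      exact hc hcc
    · intro i j hc
      rw [LRg, dif_pos (show InCell nu lam i j ∧ _ from ⟨hc, LRg_ex hr hz hc⟩)]
      omega
    · intro i j hc hc'
      obtain ⟨m, hm⟩ : ∃ m, LRg lam nu r i j = m + 1 := by
        rw [LRg, dif_pos (show InCell nu lam i j ∧ _ from ⟨hc, LRg_ex hr hz hc⟩)]
        exact ⟨_, rfl⟩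
      obtain ⟨m', hm'⟩ : ∃ m', LRg lam nu r i (j + 1) = m' + 1 := by
        rw [LRg, dif_pos (show InCell nu lam i (j + 1) ∧ _ from ⟨hc', LRg_ex hr hz hc'⟩)]
        exact ⟨_, rfl⟩
      rw [hm, hm']
      have h1 := (LRg_val hr hz hc).mp hm
      have h2 := (LRg_val hr hz hc').mp hm'
      by_contra hlt
      push_neg at hlt
      have hmono : LRpsum r (m' + 1) i ≤ LRpsum r m i := LRpsum_mono r (by omega) i
      omega
    · intro i j hc hc'
      obtain ⟨m, hm⟩ : ∃ m, LRg lam nu r i j = m + 1 := by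
        rw [LRg, dif_pos (show InCell nu lam i j ∧ _ from ⟨hc, LRg_ex hr hz hc⟩)]
        exact ⟨_, rfl⟩
      obtain ⟨m', hm'⟩ : ∃ m', LRg lam nu r (i + 1) j = m' + 1 := by
        rw [LRg, dif_pos (show InCell nu lam (i + 1) j ∧ _ from ⟨hc', LRg_ex hr hz hc'⟩)]
        exact ⟨_, rfl⟩
      rw [hm, hm']
      have h1 := (LRg_val hr hz hc).mp hm
      have h2 := (LRg_val hr hz hc').mp hm'
      have hD := LRnD hr hz i m'
      by_contra hle
      push_neg at hle
      have hmono : LRpsum r m' i ≤ LRpsum r m i := LRpsum_mono r (by omega) i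
      omega
  exact hssyt

private lemma LRg_content (hr : InLRPolytope lam mu nu r)
    (hz : ∀ k i, ∃ z : ℤ, r k i = (z : ℝ)) (k : ℕ) :
    contentCount nu lam (LRg lam nu r) (k + 1) = mu.part k := by
  rw [LRcontent_eq]
  rw [show (∑ i ∈ Finset.range nu.numParts, LRrowcnt lam nu (LRg lam nu r) i (k + 1))
      = ∑ i ∈ Finset.range nu.numParts, LRn r k i from
    Finset.sum_congr rfl fun i _ => LRrowcnt_g hr hz i k]
  exact LRnC hr hz k

private lemma LRg_ballot (hr : InLRPolytope lam mu nu r)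
    (hz : ∀ k i, ∃ z : ℤ, r k i = (z : ℝ)) : IsBallot nu lam (LRg lam nu r) := by
  intro i j k hk
  obtain ⟨m, rfl⟩ : ∃ m, k = m + 1 := ⟨k - 1, by omega⟩
  rw [LRprefix_eq, LRprefix_eq]
  have e1 : (∑ i' ∈ Finset.range i, LRrowcnt lam nu (LRg lam nu r) i' (m + 1 + 1))
      = ∑ i' ∈ Finset.range i, LRn r (m + 1) i' :=
    Finset.sum_congr rfl fun i' _ => LRrowcnt_g hr hz i' (m + 1)
  have e2 : (∑ i' ∈ Finset.range i, LRrowcnt lam nu (LRg lam nu r) i' (m + 1))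
      = ∑ i' ∈ Finset.range i, LRn r m i' :=
    Finset.sum_congr rfl fun i' _ => LRrowcnt_g hr hz i' m
  rw [e1, e2]
  have hE := LRnE hr hz i m
  have ht1 : LRtailcnt lam nu (LRg lam nu r) i j (m + 1 + 1) ≤ LRn r (m + 1) i := by
    rw [LRtailcnt_g hr hz i j (m + 1)]
    have h1 : lam.part i + LRpsum r (m + 1) i ≤ max j (lam.part i + LRpsum r (m + 1) i) :=
      le_max_right _ _
    have h2 : LRpsum r (m + 1 + 1) i = LRpsum r (m + 1) i + LRn r (m + 1) i :=
      Finset.sum_range_succ _ _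
    omega
  omega

private lemma LRg_mem (hr : InLRPolytope lam mu nu r)
    (hz : ∀ k i, ∃ z : ℤ, r k i = (z : ℝ)) : LRg lam nu r ∈ LRset lam mu nu := by
  have hm : IsSSYT nu lam (LRg lam nu r) ∧
      (∀ k, contentCount nu lam (LRg lam nu r) (k + 1) = mu.part k) ∧
      IsBallot nu lam (LRg lam nu r) :=
    ⟨LRg_ssyt hr hz, LRg_content hr hz, LRg_ballot hr hz⟩
  exact hm

private lemma LRfg (hr : InLRPolytope lam mu nu r)
    (hz : ∀ k i, ∃ z : ℤ, r k i = (z : ℝ)) : LRfmap lam nu (LRg lam nu r) = r := by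
  funext k i
  rw [LRfmap, LRrowcnt_g hr hz i k, LRn_cast hr hz k i]

end BDir

end LRAux

/-- the Littlewood-Richardson coefficient equals the number of integer lattice
points of the polytope `P_{λ,μ}^ν`. -/
theorem lr_eq_lattice_points (lam mu nu : Partn) (h : lam.size + mu.size = nu.size) :
    lrCoeff lam mu nu =
      Nat.card {r : ℕ → ℕ → ℝ //
        InLRPolytope lam mu nu r ∧ ∀ k i, ∃ z : ℤ, r k i = (z : ℝ)} := by
  have hcoe : lrCoeff lam mu nu = Nat.card (LRset lam mu nu) := rfl
  rw [hcoe]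
  apply Nat.card_congr
  exact {
    toFun := fun T => ⟨LRfmap lam nu T.1, LRfmap_mem h T.2,
      fun k i => ⟨((LRrowcnt lam nu T.1 i (k + 1) : ℕ) : ℤ), by
        rw [LRfmap]
        exact (Int.cast_natCast _).symm⟩⟩
    invFun := fun r => ⟨LRg lam nu r.1, LRg_mem r.2.1 r.2.2⟩
    left_inv := fun T => by
      have h1 := LRfmap_mem h T.2
      have h2 : ∀ k i, ∃ z : ℤ, LRfmap lam nu T.1 k i = (z : ℝ) := fun k i =>
        ⟨((LRrowcnt lam nu T.1 i (k + 1) : ℕ) : ℤ), by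
          rw [LRfmap]
          exact (Int.cast_natCast _).symm⟩
      exact Subtype.ext (LRfmap_inj (LRg_mem h1 h2) T.2 (LRfg h1 h2))
    right_inv := fun r => Subtype.ext (LRfg r.2.1 r.2.2)
  }
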